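/- For every real c > 0, the integral I(c) := ∫_{-1/3}^{∞} exp(-c·F(T))·U'(T) dT converges absolutely, and its value satisfies Im I(c) > 0, Re I(c) > 0, and Im I(c) < √3·Re I(c); consequently the argument of I(c) lies in the open interval (0, π/3). -/

import Mathlib

/-- `F(T) = 2T²(2T+1)²√(T+1)/(3T+1)^{3/2}`. -/
noncomputable def Ffun (T : ℝ) : ℝ :=
  2 * T ^ 2 * (2 * T + 1) ^ 2 * Real.sqrt (T + 1) / (3 * T + 1) ^ ((3 : ℝ) / 2)

/-- `U(T) = T(√((T+1)/(3T+1)) + i)`. -/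
noncomputable def Ufun (T : ℝ) : ℂ :=
  (T : ℂ) * ((Real.sqrt ((T + 1) / (3 * T + 1)) : ℂ) + Complex.I)

/-! On `T > -1/3` both `F` and `ψ := Re U'` are polynomials times the same weight
`w = ((3T+1)^{3/2} √(T+1))⁻¹`: `F = 2T²(2T+1)²(T+1) w` and `ψ = (3T²+3T+1) w`, while
`Im U' = 1`. So `Im I = ∫ e^{-cF} > 0` and `√3 Re I - Im I = ∫ e^{-cF} (√3 ψ - 1) > 0`, since
`3 (3T²+3T+1)² - (3T+1)³ (T+1) = 9T² + 8T + 2 > 0`. For convergence, `ψ ≤ 243 F + 8` together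
with `F e^{-cF/2} ≤ 2/c` tames the blow-up of `ψ` at `-1/3`, and `F ≥ (T-1)/2` gives exponential
decay at infinity. -/

open Real MeasureTheory Set

theorem Complex.arg_mem_Ioo_zero_pi_div_three {z : ℂ} (him : 0 < z.im)
    (hlt : z.im < √3 * z.re) : z.arg ∈ Ioo 0 (π / 3) := by
  have hre : 0 < z.re := by
    by_contra! h
    nlinarith [sqrt_nonneg 3]
  have harg : z.arg = Real.arctan (z.im / z.re) := by
    have := abs_lt.1 (abs_arg_lt_pi_div_two_iff.2 (Or.inl hre))
    rw [← tan_arg, Real.arctan_tan this.1 this.2]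
  rw [harg, ← Real.arctan_zero, ← Real.arctan_sqrt_three]
  exact ⟨Real.arctan_strictMono (div_pos him hre),
    Real.arctan_strictMono ((div_lt_iff₀ hre).2 hlt)⟩

theorem ContinuousLinearMap.setIntegral_apply_pos {α E : Type*} [MeasurableSpace α]
    [NormedAddCommGroup E] [NormedSpace ℝ E] [CompleteSpace E] {μ : Measure α} {s : Set α}
    (L : E →L[ℝ] ℝ) {f : α → E} (hf : IntegrableOn f s μ) (hs : MeasurableSet s)
    (hμ : μ s ≠ 0) (hpos : ∀ x ∈ s, 0 < L (f x)) : 0 < L (∫ x in s, f x ∂μ) := by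
  rw [← L.integral_comp_comm hf, setIntegral_pos_iff_support_of_nonneg_ae
    ((ae_restrict_iff' hs).2 (ae_of_all _ fun x hx => (hpos x hx).le)) (L.integrable_comp hf),
    inter_eq_right.2 fun x hx => Function.mem_support.2 (hpos x hx).ne']
  exact pos_iff_ne_zero.2 hμ

theorem Real.mul_exp_neg_mul_le_inv {c : ℝ} (hc : 0 < c) (x : ℝ) : x * exp (-(c * x)) ≤ c⁻¹ :=
  calc x * exp (-(c * x)) = c⁻¹ * (c * x * exp (-(c * x))) := by field_simp
    _ ≤ c⁻¹ * (exp (c * x) * exp (-(c * x))) := by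
        gcongr
        linarith [add_one_le_exp (c * x)]
    _ = c⁻¹ := by rw [← exp_add, add_neg_cancel, exp_zero, mul_one]

namespace SteepestDescent

noncomputable def weight (T : ℝ) : ℝ := ((3 * T + 1) ^ ((3 : ℝ) / 2) * √(T + 1))⁻¹

noncomputable def psi (T : ℝ) : ℝ := (3 * T ^ 2 + 3 * T + 1) * weight T

variable {T : ℝ}

lemma weight_pos (hT : -(1 : ℝ) / 3 < T) : 0 < weight T := by
  have : 0 < 3 * T + 1 := by linarith
  have : 0 < T + 1 := by linarith
  unfold weight
  positivity

lemma weight_sq (hT : -(1 : ℝ) / 3 < T) : weight T ^ 2 = ((3 * T + 1) ^ 3 * (T + 1))⁻¹ := by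
  have hs : 0 ≤ 3 * T + 1 := by linarith
  rw [weight, inv_pow, mul_pow, sq_sqrt (by linarith), ← rpow_natCast, ← rpow_mul hs]
  norm_num

lemma Ffun_eq_mul_weight (hT : -(1 : ℝ) / 3 < T) :
    Ffun T = 2 * T ^ 2 * (2 * T + 1) ^ 2 * (T + 1) * weight T := by
  have hs : 0 < (3 * T + 1) ^ ((3 : ℝ) / 2) := rpow_pos_of_pos (by linarith) _
  have ht : 0 < √(T + 1) := sqrt_pos.2 (by linarith)
  rw [Ffun, weight]
  field_simp
  rw [sq_sqrt (by linarith)]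

lemma psi_pos (hT : -(1 : ℝ) / 3 < T) : 0 < psi T :=
  mul_pos (by nlinarith [sq_nonneg (2 * T + 1)]) (weight_pos hT)

lemma Ffun_nonneg (hT : -(1 : ℝ) / 3 < T) : 0 ≤ Ffun T := by
  rw [Ffun_eq_mul_weight hT]
  have := weight_pos hT
  have : 0 ≤ T + 1 := by linarith
  positivity

lemma hasDerivAt_Ufun (hT : -(1 : ℝ) / 3 < T) : HasDerivAt Ufun (psi T + Complex.I) T := by
  have hs : 0 < 3 * T + 1 := by linarith
  have ht : 0 < T + 1 := by linarith
  have hq : 0 < (T + 1) / (3 * T + 1) := div_pos ht hs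
  have hg_pos : 0 < √((T + 1) / (3 * T + 1)) := sqrt_pos.2 hq
  have hg_sq : √((T + 1) / (3 * T + 1)) ^ 2 = (T + 1) / (3 * T + 1) := sq_sqrt hq.le
  have hgw : √((T + 1) / (3 * T + 1)) * (3 * T + 1) ^ 2 * weight T = 1 := by
    refine (pow_left_inj₀ (by positivity [weight_pos hT]) zero_le_one two_ne_zero).1 ?_
    rw [mul_pow, mul_pow, hg_sq, weight_sq hT]
    generalize 3 * T + 1 = s at hs ⊢
    field_simp
  have hquot : HasDerivAt (fun t : ℝ => (t + 1) / (3 * t + 1)) (-2 / (3 * T + 1) ^ 2) T :=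
    (((hasDerivAt_id' T).add_const 1).div
      (((hasDerivAt_id' T).const_mul 3).add_const 1) hs.ne').congr_deriv (by ring)
  refine ((hasDerivAt_id' T).ofReal_comp.mul
    ((hquot.sqrt hq.ne').ofReal_comp.add_const Complex.I)).congr_deriv ?_
  have hreal : √((T + 1) / (3 * T + 1)) + T * (-2 / (3 * T + 1) ^ 2 /
      (2 * √((T + 1) / (3 * T + 1)))) = psi T := by
    rw [psi, eq_inv_of_mul_eq_one_right hgw]
    generalize √((T + 1) / (3 * T + 1)) = g at hg_pos hg_sq ⊢
    rw [eq_div_iff hs.ne'] at hg_sq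
    generalize hs_eq : 3 * T + 1 = s at hs hg_sq ⊢
    field_simp
    linear_combination s * hg_sq - (T + 1) * hs_eq
  rw [← hreal]
  push_cast
  ring

lemma one_lt_sqrt_three_mul_psi (hT : -(1 : ℝ) / 3 < T) : 1 < √3 * psi T := by
  have hw := weight_sq hT
  have hs : 0 < (3 * T + 1) ^ 3 * (T + 1) := mul_pos (pow_pos (by linarith) 3) (by linarith)
  have hpsi_sq : 1 < 3 * psi T ^ 2 := by
    rw [psi, mul_pow, hw, ← div_eq_mul_inv, mul_div_assoc', one_lt_div hs]
    nlinarith [sq_nonneg (3 * T + 4 / 3)]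
  refine lt_of_pow_lt_pow_left₀ 2 (mul_nonneg (sqrt_nonneg 3) (psi_pos hT).le) ?_
  rwa [one_pow, mul_pow, sq_sqrt zero_le_three]

lemma psi_le_mul_Ffun_add (hT : -(1 : ℝ) / 3 < T) : psi T ≤ 243 * Ffun T + 8 := by
  rcases le_or_gt T (-(1 : ℝ) / 6) with hleft | hright
  · have hpoly : 3 * T ^ 2 + 3 * T + 1 ≤ 243 * (2 * T ^ 2 * (2 * T + 1) ^ 2 * (T + 1)) := by
      have h1 : 1 / 36 ≤ T ^ 2 := by nlinarith
      have h2 : 1 / 9 ≤ (2 * T + 1) ^ 2 := by nlinarith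
      have h12 : 1 / 324 ≤ T ^ 2 * (2 * T + 1) ^ 2 := by nlinarith
      nlinarith
    rw [psi, Ffun_eq_mul_weight hT]
    nlinarith [weight_pos hT]
  · have hpoly : (3 * T ^ 2 + 3 * T + 1) ^ 2 ≤ 64 * ((3 * T + 1) ^ 3 * (T + 1)) := by
      nlinarith [sq_nonneg T, sq_nonneg (T + 1 / 6)]
    have hpsi_sq : psi T ^ 2 ≤ 64 := by
      rw [psi, mul_pow, weight_sq hT, ← div_eq_mul_inv, div_le_iff₀ (by nlinarith)]
      exact hpoly
    nlinarith [Ffun_nonneg hT, psi_pos hT]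

lemma sub_one_div_two_le_Ffun (hT : -(1 : ℝ) / 3 < T) : (T - 1) / 2 ≤ Ffun T := by
  rcases le_or_gt T 1 with hT1 | hT1
  · linarith [Ffun_nonneg hT]
  have hpsi : 1 < 2 * psi T := by
    have : √3 < 2 := by rw [sqrt_lt' two_pos]; norm_num
    nlinarith [one_lt_sqrt_three_mul_psi hT, psi_pos hT]
  have hpoly : (T - 1) * (3 * T ^ 2 + 3 * T + 1) ≤ 2 * T ^ 2 * (2 * T + 1) ^ 2 * (T + 1) := by
    have hcubic : 7 * T ≤ 2 * (2 * T + 1) ^ 2 * (T + 1) := by nlinarith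
    nlinarith [mul_le_mul_of_nonneg_left hcubic (sq_nonneg T)]
  rw [Ffun_eq_mul_weight hT]
  rw [psi] at hpsi
  nlinarith [weight_pos hT]

variable {c : ℝ}

lemma integrand_eq (hT : -(1 : ℝ) / 3 < T) :
    Complex.exp (((-(c * Ffun T) : ℝ) : ℂ)) * deriv Ufun T
      = (exp (-(c * Ffun T)) : ℂ) * (psi T + Complex.I) := by
  rw [(hasDerivAt_Ufun hT).deriv, ← Complex.ofReal_exp]

lemma im_integrand_pos (hT : -(1 : ℝ) / 3 < T) :
    0 < (Complex.exp (((-(c * Ffun T) : ℝ) : ℂ)) * deriv Ufun T).im := by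
  rw [integrand_eq hT, Complex.im_ofReal_mul, Complex.add_im, Complex.ofReal_im, Complex.I_im,
    zero_add, mul_one]
  exact exp_pos _

lemma im_integrand_lt_sqrt_three_mul_re (hT : -(1 : ℝ) / 3 < T) :
    (Complex.exp (((-(c * Ffun T) : ℝ) : ℂ)) * deriv Ufun T).im
      < √3 * (Complex.exp (((-(c * Ffun T) : ℝ) : ℂ)) * deriv Ufun T).re := by
  rw [integrand_eq hT, Complex.im_ofReal_mul, Complex.re_ofReal_mul, Complex.add_im,
    Complex.add_re, Complex.ofReal_im, Complex.ofReal_re, Complex.I_im, Complex.I_re]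
  nlinarith [exp_pos (-(c * Ffun T)), one_lt_sqrt_three_mul_psi hT]

lemma norm_integrand_le (hc : 0 < c) (hT : -(1 : ℝ) / 3 < T) :
    ‖Complex.exp (((-(c * Ffun T) : ℝ) : ℂ)) * deriv Ufun T‖
      ≤ (486 / c + 9) * exp (c / 4) * exp (-(c / 4) * T) := by
  rw [integrand_eq hT, norm_mul, Complex.norm_real, norm_of_nonneg (exp_pos _).le]
  have hF := Ffun_nonneg hT
  have hderiv : ‖(psi T : ℂ) + Complex.I‖ ≤ 243 * Ffun T + 9 := by
    refine (norm_add_le _ _).trans ?_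
    rw [Complex.norm_real, Complex.norm_I, norm_of_nonneg (psi_pos hT).le]
    linarith [psi_le_mul_Ffun_add hT]
  have hsplit : exp (-(c * Ffun T)) = exp (-(c / 2 * Ffun T)) * exp (-(c / 2 * Ffun T)) := by
    rw [← exp_add]
    ring_nf
  have hhalf : exp (-(c / 2 * Ffun T)) ≤ 1 := exp_le_one_iff.2 (by nlinarith)
  have hdecay : exp (-(c / 2 * Ffun T)) ≤ exp (c / 4) * exp (-(c / 4) * T) := by
    rw [← exp_add, exp_le_exp]
    nlinarith [sub_one_div_two_le_Ffun hT]
  calc exp (-(c * Ffun T)) * ‖(psi T : ℂ) + Complex.I‖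
      ≤ exp (-(c * Ffun T)) * (243 * Ffun T + 9) := by gcongr
    _ = (243 * (Ffun T * exp (-(c / 2 * Ffun T))) + 9 * exp (-(c / 2 * Ffun T)))
          * exp (-(c / 2 * Ffun T)) := by rw [hsplit]; ring
    _ ≤ (243 * (c / 2)⁻¹ + 9 * 1) * (exp (c / 4) * exp (-(c / 4) * T)) := by
        gcongr
        exact mul_exp_neg_mul_le_inv (half_pos hc) _
    _ = (486 / c + 9) * exp (c / 4) * exp (-(c / 4) * T) := by ring

lemma integrableOn_integrand (hc : 0 < c) :
    IntegrableOn (fun T => Complex.exp (((-(c * Ffun T) : ℝ) : ℂ)) * deriv Ufun T)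
      (Ioi (-(1 : ℝ) / 3)) := by
  refine Integrable.mono' ((exp_neg_integrableOn_Ioi _ (by positivity : 0 < c / 4)).const_mul
    ((486 / c + 9) * exp (c / 4))) ?_ ((ae_restrict_iff' measurableSet_Ioi).2
      (ae_of_all _ fun T hT => norm_integrand_le hc hT))
  unfold Ffun
  fun_prop

end SteepestDescent

/-- For `c > 0`, `I(c) = ∫_{-1/3}^∞ e^{-c F(T)} U'(T) dT` converges absolutely, and
`Im I(c) > 0`, `Re I(c) > 0`, `Im I(c) < √3 Re I(c)`, so `arg I(c) ∈ (0, π/3)`. -/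
theorem steepest_descent_integral_argument (c : ℝ) (hc : 0 < c) :
    MeasureTheory.IntegrableOn
      (fun T : ℝ => Complex.exp (((-(c * Ffun T) : ℝ) : ℂ)) * deriv Ufun T)
      (Set.Ioi (-(1 : ℝ) / 3)) ∧
    ∀ I : ℂ,
      I = (∫ T in Set.Ioi (-(1 : ℝ) / 3),
        Complex.exp (((-(c * Ffun T) : ℝ) : ℂ)) * deriv Ufun T) →
      0 < I.im ∧ 0 < I.re ∧ I.im < Real.sqrt 3 * I.re ∧
        Complex.arg I ∈ Set.Ioo 0 (Real.pi / 3) := by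
  have hint := SteepestDescent.integrableOn_integrand hc
  refine ⟨hint, fun I hI => ?_⟩
  have him : 0 < I.im := hI ▸ Complex.imCLM.setIntegral_apply_pos hint measurableSet_Ioi
    (by simp) fun T hT => SteepestDescent.im_integrand_pos hT
  have hlt : I.im < √3 * I.re := sub_pos.1 <| hI ▸
    (√3 • Complex.reCLM - Complex.imCLM).setIntegral_apply_pos hint measurableSet_Ioi
      (by simp) fun T hT => sub_pos.2 (SteepestDescent.im_integrand_lt_sqrt_three_mul_re hT)
  have hre : 0 < I.re := by nlinarith [sqrt_nonneg 3]
  exact ⟨him, hre, hlt, Complex.arg_mem_Ioo_zero_pi_div_three him hlt⟩
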